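/- Let I_many = [0,1] x D with pseudometric d((x, a), (y, b)) = |x - y|, where D is a set of cardinality 2^{aleph_0}. There exists an injective function e : I_many -> [0,1]^3 such that for all p, q in I_many, ||e(p) - e(q)||_2 >= (1/243) * sqrt(d(p, q)), where ||.||_2 is the Euclidean norm on R^3. -/

import Mathlib

/-!
Write `t / 2` in base 25 and pair its `n`-th digit with the `n`-th bit of the label
`d ∈ D ≃ (ℕ → Bool)`. The 50 possible pairs embed into `{0,1,2,3}³`, and the three resulting
digit sequences are read as base-5 numbers. Because the digit 4 is never used, no carry can
compensate a difference: if the symbol sequences of two points first differ at position `n`,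
their images are at distance at least `5^-(n+1) / 4`, while `|t - s| ≤ 2 · 25^-n`.
-/

namespace Real

variable {b : ℕ}

theorem ofDigits_le_div_of_forall_le {c : ℕ} (hb : 1 < b) {x : ℕ → Fin b}
    (hx : ∀ i, (x i : ℕ) ≤ c) : ofDigits x ≤ c / (b - 1) := by
  have hb' : (1 : ℝ) < b := mod_cast hb
  have hgeom : HasSum (fun i : ℕ ↦ c * ((b : ℝ) ^ (i + 1))⁻¹) (c / (b - 1)) := by
    have h := (hasSum_geometric_of_lt_one (r := (b : ℝ)⁻¹) (by positivity)
      (inv_lt_one_of_one_lt₀ hb')).mul_left (c * (b : ℝ)⁻¹)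
    have hfun : (fun i : ℕ ↦ c * ((b : ℝ) ^ (i + 1))⁻¹) =
        fun i ↦ c * (b : ℝ)⁻¹ * (b : ℝ)⁻¹ ^ i := by
      ext i; ring
    have hsum : (c : ℝ) / (b - 1) = c * (b : ℝ)⁻¹ * (1 - (b : ℝ)⁻¹)⁻¹ := by
      have : (b : ℝ) - 1 ≠ 0 := by linarith
      field_simp
    rwa [hfun, hsum]
  refine hasSum_le (fun i ↦ ?_) summable_ofDigitsTerm.hasSum hgeom
  unfold ofDigitsTerm
  gcongr
  exact_mod_cast hx i

theorem ofDigits_eq_add_ofDigits_tail (x : ℕ → Fin b) :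
    ofDigits x = (x 0 + ofDigits (fun i ↦ x (i + 1))) / b := by
  rw [ofDigits_eq_sum_add_ofDigits x 1]
  simp only [Finset.range_one, ofDigitsTerm, Finset.sum_singleton, zero_add, pow_one]
  ring

theorem inv_le_abs_ofDigits_sub_ofDigits_of_apply_zero_ne {x y : ℕ → Fin b}
    (hx : ∀ i, (x i : ℕ) + 2 ≤ b) (hy : ∀ i, (y i : ℕ) + 2 ≤ b) (h0 : x 0 ≠ y 0) :
    ((b : ℝ) * (b - 1))⁻¹ ≤ |ofDigits x - ofDigits y| := by
  have hb : 2 ≤ b := by have := hx 0; omega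
  have hb' : (2 : ℝ) ≤ b := mod_cast hb
  have tail_mem (z : ℕ → Fin b) (hz : ∀ i, (z i : ℕ) + 2 ≤ b) :
      ofDigits (fun i ↦ z (i + 1)) ∈ Set.Icc 0 (((b : ℝ) - 2) / (b - 1)) := by
    refine ⟨ofDigits_nonneg _, ?_⟩
    have := ofDigits_le_div_of_forall_le (c := b - 2) (by omega) (x := fun i ↦ z (i + 1))
      (fun i ↦ by have := hz (i + 1); omega)
    rwa [Nat.cast_sub hb, Nat.cast_two] at this
  have head : (1 : ℝ) ≤ |(x 0 : ℝ) - y 0| := by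
    have : ((x 0 : ℕ) : ℤ) ≠ (y 0 : ℕ) := by exact_mod_cast Fin.val_ne_of_ne h0
    exact_mod_cast Int.one_le_abs (sub_ne_zero.2 this)
  have tail : |ofDigits (fun i ↦ x (i + 1)) - ofDigits (fun i ↦ y (i + 1))|
      ≤ ((b : ℝ) - 2) / (b - 1) := by
    simpa using abs_sub_le_of_le_of_le (tail_mem x hx).1 (tail_mem x hx).2
      (tail_mem y hy).1 (tail_mem y hy).2
  rw [ofDigits_eq_add_ofDigits_tail x, ofDigits_eq_add_ofDigits_tail y, ← sub_div, abs_div,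
    Nat.abs_cast, add_sub_add_comm]
  calc ((b : ℝ) * (b - 1))⁻¹ = (1 - (b - 2) / (b - 1)) / b := by
        have : (b : ℝ) - 1 ≠ 0 := by linarith
        field_simp
        ring
    _ ≤ _ := by
        gcongr
        have := abs_sub_abs_le_abs_sub ((x 0 : ℝ) - y 0)
          (-(ofDigits (fun i ↦ x (i + 1)) - ofDigits (fun i ↦ y (i + 1))))
        rw [abs_neg, sub_neg_eq_add] at this
        linarith

theorem inv_le_abs_ofDigits_sub_ofDigits {x y : ℕ → Fin b} {n : ℕ}
    (hx : ∀ i, (x i : ℕ) + 2 ≤ b) (hy : ∀ i, (y i : ℕ) + 2 ≤ b)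
    (hxy : ∀ i < n, x i = y i) (hn : x n ≠ y n) :
    ((b : ℝ) ^ (n + 1) * (b - 1))⁻¹ ≤ |ofDigits x - ofDigits y| := by
  have hsum : ∑ i ∈ Finset.range n, ofDigitsTerm x i = ∑ i ∈ Finset.range n, ofDigitsTerm y i :=
    Finset.sum_congr rfl fun i hi ↦ by simp only [ofDigitsTerm, hxy i (Finset.mem_range.mp hi)]
  have hshift := inv_le_abs_ofDigits_sub_ofDigits_of_apply_zero_ne (x := fun i ↦ x (i + n))
    (y := fun i ↦ y (i + n)) (fun i ↦ hx _) (fun i ↦ hy _) (by simpa using hn)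
  have hb : (0 : ℝ) < b := by have := hx 0; exact_mod_cast (by omega : 0 < b)
  rw [ofDigits_eq_sum_add_ofDigits x n, ofDigits_eq_sum_add_ofDigits y n, hsum,
    add_sub_add_left_eq_sub, ← mul_sub, abs_mul, abs_of_pos (by positivity), pow_succ,
    mul_assoc, mul_inv]
  gcongr

theorem abs_sub_le_of_digits_eq {b : ℕ} [NeZero b] (hb : 1 < b) {x y : ℝ}
    (hx : x ∈ Set.Ico 0 1) (hy : y ∈ Set.Ico 0 1) {n : ℕ}
    (h : ∀ i < n, digits x b i = digits y b i) : |x - y| ≤ ((b : ℝ) ^ n)⁻¹ := by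
  rw [← ofDigits_digits hb hx, ← ofDigits_digits hb hy]
  exact abs_ofDigits_sub_ofDigits_le h

end Real

open Real PiNat

section Cube

variable {κ : Type*}

noncomputable def cubeOfDigits (u : ℕ → κ → Fin 4) : EuclideanSpace ℝ κ :=
  WithLp.toLp 2 fun i ↦ ofDigits fun n ↦ (u n i).castSucc

theorem cubeOfDigits_apply_mem_Icc (u : ℕ → κ → Fin 4) (i : κ) :
    cubeOfDigits u i ∈ Set.Icc 0 1 :=
  ⟨ofDigits_nonneg _, ofDigits_le_one _⟩

theorem inv_le_norm_cubeOfDigits_sub [Fintype κ] {u v : ℕ → κ → Fin 4} (h : u ≠ v) :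
    ((5 : ℝ) ^ (firstDiff u v + 1) * 4)⁻¹ ≤ ‖cubeOfDigits u - cubeOfDigits v‖ := by
  obtain ⟨i, hi⟩ := Function.ne_iff.1 (apply_firstDiff_ne h)
  have digit_le (w : ℕ → κ → Fin 4) (k : ℕ) : ((w k i).castSucc : ℕ) + 2 ≤ 5 := by
    have := (w k i).isLt; simp only [Fin.val_castSucc]; omega
  have hcoord := inv_le_abs_ofDigits_sub_ofDigits (digit_le u) (digit_le v)
    (fun k hk ↦ by rw [apply_eq_of_lt_firstDiff hk]) (Fin.castSucc_injective _ |>.ne hi)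
  calc ((5 : ℝ) ^ (firstDiff u v + 1) * 4)⁻¹
      = (((5 : ℕ) : ℝ) ^ (firstDiff u v + 1) * ((5 : ℕ) - 1))⁻¹ := by norm_num
    _ ≤ _ := hcoord
    _ ≤ _ := PiLp.norm_apply_le (cubeOfDigits u - cubeOfDigits v) i

theorem cubeOfDigits_injective [Fintype κ] : Function.Injective (cubeOfDigits (κ := κ)) := by
  intro u v huv
  by_contra h
  have := inv_le_norm_cubeOfDigits_sub h
  rw [huv, sub_self, norm_zero] at this
  exact this.not_gt (by positivity)

end Cube

section Encoding

variable {D κ : Type*}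

/-- Halving `t` keeps it in `[0, 1)`, where `Real.digits` is faithful (`1` would get the digits
of `0`). -/
noncomputable def interleavedDigits (σ : D → ℕ → Bool) (ι : Fin 25 × Bool → κ → Fin 4)
    (p : Set.Icc (0 : ℝ) 1 × D) : ℕ → κ → Fin 4 :=
  fun n ↦ ι (digits ((p.1 : ℝ) / 2) 25 n, σ p.2 n)

theorem half_mem_Ico (t : Set.Icc (0 : ℝ) 1) : (t : ℝ) / 2 ∈ Set.Ico 0 1 :=
  ⟨by linarith [t.2.1], by linarith [t.2.2]⟩

variable {σ : D → ℕ → Bool} {ι : Fin 25 × Bool → κ → Fin 4}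

theorem interleavedDigits_injective (hσ : Function.Injective σ) (hι : Function.Injective ι) :
    Function.Injective (interleavedDigits σ ι) := by
  intro p q h
  have hdig : digits ((p.1 : ℝ) / 2) 25 = digits ((q.1 : ℝ) / 2) 25 :=
    funext fun n ↦ (Prod.ext_iff.1 (hι (congrFun h n))).1
  have hbit : σ p.2 = σ q.2 := funext fun n ↦ (Prod.ext_iff.1 (hι (congrFun h n))).2
  have hhalf := congrArg ofDigits hdig
  rw [ofDigits_digits (by norm_num) (half_mem_Ico p.1),
    ofDigits_digits (by norm_num) (half_mem_Ico q.1)] at hhalf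
  exact Prod.ext (Subtype.ext (by linarith)) (hσ hbit)

theorem abs_sub_le_of_interleavedDigits_eq (hι : Function.Injective ι)
    {p q : Set.Icc (0 : ℝ) 1 × D} {n : ℕ}
    (h : ∀ k < n, interleavedDigits σ ι p k = interleavedDigits σ ι q k) :
    |(p.1 : ℝ) - q.1| ≤ 2 * ((25 : ℝ) ^ n)⁻¹ := by
  have := abs_sub_le_of_digits_eq (by norm_num) (half_mem_Ico p.1) (half_mem_Ico q.1)
    fun k hk ↦ (Prod.ext_iff.1 (hι (h k hk))).1
  rw [← sub_div, abs_div, abs_two] at this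
  push_cast at this
  linarith

end Encoding

theorem inv_243_mul_sqrt_le (n : ℕ) :
    1 / 243 * √(2 * ((25 : ℝ) ^ n)⁻¹) ≤ ((5 : ℝ) ^ (n + 1) * 4)⁻¹ := by
  have h25 : (25 : ℝ) ^ n = (5 ^ n) ^ 2 := by rw [← pow_mul, mul_comm, pow_mul]; norm_num
  have hsqrt : √(2 * ((25 : ℝ) ^ n)⁻¹) ≤ 2 * ((5 : ℝ) ^ n)⁻¹ := by
    rw [Real.sqrt_le_iff, h25]
    refine ⟨by positivity, ?_⟩
    rw [mul_pow, inv_pow]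
    gcongr
    norm_num
  rw [pow_succ, mul_assoc, mul_inv]
  nlinarith [show (0 : ℝ) < ((5 : ℝ) ^ n)⁻¹ by positivity]

theorem stmt_9 (D : Type) (hD : Cardinal.mk D = 2 ^ Cardinal.aleph0) :
    ∃ e : Set.Icc (0:ℝ) 1 × D → EuclideanSpace ℝ (Fin 3),
      (∀ p, ∀ i, e p i ∈ Set.Icc (0:ℝ) 1) ∧
      Function.Injective e ∧
      ∀ p q, ‖e p - e q‖ ≥ (1 / 243) * Real.sqrt |(p.1 : ℝ) - (q.1 : ℝ)| := by
  obtain ⟨σ⟩ : Nonempty (D ↪ (ℕ → Bool)) := by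
    rw [← Cardinal.le_def, hD]
    simp
  obtain ⟨ι⟩ : Nonempty (Fin 25 × Bool ↪ (Fin 3 → Fin 4)) :=
    Function.Embedding.nonempty_of_card_le (by simp)
  have hcode := interleavedDigits_injective σ.injective ι.injective
  refine ⟨fun p ↦ cubeOfDigits (interleavedDigits σ ι p), fun p ↦ cubeOfDigits_apply_mem_Icc _,
    cubeOfDigits_injective.comp hcode, fun p q ↦ ?_⟩
  rcases eq_or_ne p q with rfl | hpq
  · simp
  have hne := hcode.ne hpq
  calc 1 / 243 * √|(p.1 : ℝ) - q.1|
      ≤ 1 / 243 * √(2 * ((25 : ℝ) ^ firstDiff _ _)⁻¹) := by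
        gcongr
        exact abs_sub_le_of_interleavedDigits_eq ι.injective fun k ↦ apply_eq_of_lt_firstDiff
    _ ≤ _ := inv_243_mul_sqrt_le _
    _ ≤ _ := inv_le_norm_cubeOfDigits_sub hne
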